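/- arXiv:math/0507602 — 5 statements merged into one kernel-verified Lean document; each statement's English description precedes it below -/
import Mathlib

section
/- Let δ_i : ℤF → ℤF denote Fox derivatives and, for w ∈ ℤF, write w(1) for the value of w under the augmentation. For any finite sequence of indices i_1, …, i_r ∈ {1, …, n} (repetitions allowed) and any group elements u, v ∈ F, the iterated Fox derivative of a product evaluated at 1 satisfies the product formula: δ_{i_1}…δ_{i_r}(uv)(1) = Σ_{k=0}^{r} δ_{i_1}…δ_{i_k}(u)(1) · δ_{i_{k+1}}…δ_{i_r}(v)(1), where an empty composite of Fox derivatives applied to a group element and evaluated at 1 is understood to be 1. -/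
open MonoidAlgebra

/-- `FG n` is the free group on `n` generators `x_1, …, x_n`. -/
abbrev FG (n : ℕ) : Type := FreeGroup (Fin n)

/-- `GR n` is the integral group ring `ℤF` of the free group on `n` generators. -/
abbrev GR (n : ℕ) : Type := MonoidAlgebra ℤ (FG n)

/-- Iterated application of Fox derivatives along a list of indices:
`foxIter δ [i₁, …, iᵣ] x = δ i₁ (δ i₂ (⋯ (δ iᵣ x)))`; the empty list gives `x` itself. -/
noncomputable def foxIter {n : ℕ} (δ : Fin n → (GR n →ₗ[ℤ] GR n)) : List (Fin n) → GR n → GR n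
  | [], x => x
  | i :: l, x => δ i (foxIter δ l x)

/-!
Extending the Leibniz rule `δ(gh) = δ g + g δ h` linearly in `h` gives
`δ(g w) = ε(w) δ g + g δ w` for a group element `g` and any `w ∈ ℤF`. Iterating it along
`i₁, …, iᵣ`, every term except `g · δ_{i₁}…δ_{iᵣ} w` has the form
`ε(δ_{iₖ₊₁}…δ_{iᵣ} w) · δ_{i₁}…δ_{iₖ} g` with `k ≥ 1`; applying `ε` to the whole expansion and
using `ε g = 1` gives the product formula, the first term supplying the summand `k = 0`.
-/

section

variable {G : Type*} [Monoid G]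

theorem map_of_mul_of_leibniz {D : MonoidAlgebra ℤ G →ₗ[ℤ] MonoidAlgebra ℤ G}
    (hD : ∀ g h : G, D (of ℤ G (g * h)) = D (of ℤ G g) + of ℤ G g * D (of ℤ G h))
    {ε : MonoidAlgebra ℤ G →+* ℤ} (hε : ∀ g : G, ε (of ℤ G g) = 1) (g : G)
    (w : MonoidAlgebra ℤ G) :
    D (of ℤ G g * w) = ε w • D (of ℤ G g) + of ℤ G g * D w := by
  induction w using MonoidAlgebra.induction_on with
  | of h => rw [← map_mul, hD, hε, one_smul]
  | add x y hx hy =>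
    rw [mul_add, map_add, hx, hy, map_add, map_add, mul_add, add_smul]
    abel
  | smul r x hx =>
    rw [mul_smul_comm, map_zsmul, hx, map_zsmul, map_zsmul, smul_add, smul_eq_mul, mul_smul,
      mul_smul_comm]

end

section

variable {n : ℕ} (δ : Fin n → (GR n →ₗ[ℤ] GR n))

@[simp]
theorem foxIter_nil (x : GR n) : foxIter δ [] x = x := rfl

@[simp]
theorem foxIter_cons (i : Fin n) (l : List (Fin n)) (x : GR n) :
    foxIter δ (i :: l) x = δ i (foxIter δ l x) := rfl

variable {δ}

theorem foxIter_of_mul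
    (hδ : ∀ (i : Fin n) (u v : FG n),
      δ i (of ℤ (FG n) (u * v)) = δ i (of ℤ (FG n) u) + of ℤ (FG n) u * δ i (of ℤ (FG n) v))
    {ε : GR n →+* ℤ} (hε : ∀ g : FG n, ε (of ℤ (FG n) g) = 1)
    (l : List (Fin n)) (u : FG n) (w : GR n) :
    foxIter δ l (of ℤ (FG n) u * w) = of ℤ (FG n) u * foxIter δ l w +
      ∑ k ∈ Finset.range l.length,
        ε (foxIter δ (l.drop (k + 1)) w) • foxIter δ (l.take (k + 1)) (of ℤ (FG n) u) := by
  induction l with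
  | nil => simp
  | cons i l ih =>
    simp only [foxIter_cons, ih, map_add, map_of_mul_of_leibniz (hδ i) hε, map_sum, map_zsmul,
      List.length_cons, Finset.sum_range_succ', List.drop_succ_cons, List.take_succ_cons,
      List.drop_zero, List.take_zero, foxIter_nil]
    abel

end

theorem fox_derivative_iterated_product_formula_general (n : ℕ)
    (δ : Fin n → (GR n →ₗ[ℤ] GR n))
    (hδ₃ : ∀ (i : Fin n) (u v : FG n),
      δ i (of ℤ (FG n) (u * v)) =
        δ i (of ℤ (FG n) u) + of ℤ (FG n) u * δ i (of ℤ (FG n) v))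
    (ε : GR n →+* ℤ)
    (hε : ∀ g : FG n, ε (of ℤ (FG n) g) = 1)
    (l : List (Fin n)) (u v : FG n) :
    ε (foxIter δ l (of ℤ (FG n) (u * v))) =
      ∑ k ∈ Finset.range (l.length + 1),
        ε (foxIter δ (l.take k) (of ℤ (FG n) u)) *
          ε (foxIter δ (l.drop k) (of ℤ (FG n) v)) := by
  rw [map_mul, foxIter_of_mul hδ₃ hε, Finset.sum_range_succ', add_comm]
  simp only [map_add, map_mul, map_sum, map_zsmul, smul_eq_mul, hε, List.take_zero,
    List.drop_zero, foxIter_nil, mul_comm]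

/-- Product formula for iterated Fox derivatives evaluated at `1` (repetitions of
indices allowed): `δ_{i₁}…δ_{iᵣ}(uv)(1) = Σₖ δ_{i₁}…δ_{iₖ}(u)(1) · δ_{iₖ₊₁}…δ_{iᵣ}(v)(1)`. -/
theorem fox_derivative_iterated_product_formula (n : ℕ)
    (δ : Fin n → (GR n →ₗ[ℤ] GR n))
    (hδ₁ : ∀ i : Fin n, δ i (of ℤ (FG n) (FreeGroup.of i)) = 1)
    (hδ₂ : ∀ i j : Fin n, j ≠ i → δ i (of ℤ (FG n) (FreeGroup.of j)) = 0)
    (hδ₃ : ∀ (i : Fin n) (u v : FG n),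
      δ i (of ℤ (FG n) (u * v)) =
        δ i (of ℤ (FG n) u) + of ℤ (FG n) u * δ i (of ℤ (FG n) v))
    (ε : GR n →+* ℤ)
    (hε : ∀ g : FG n, ε (of ℤ (FG n) g) = 1)
    (l : List (Fin n)) (u v : FG n) :
    ε (foxIter δ l (of ℤ (FG n) (u * v))) =
      ∑ k ∈ Finset.range (l.length + 1),
        ε (foxIter δ (l.take k) (of ℤ (FG n) u)) *
          ε (foxIter δ (l.drop k) (of ℤ (FG n) v)) :=
  fox_derivative_iterated_product_formula_general n δ hδ₃ ε hε l u v
end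

section
/- (Key Fox calculus lemma.) Let i_1, …, i_r ∈ {1, …, n} be pairwise distinct indices, let 1 ≤ k ≤ r, let ε = ±1, and let u, v ∈ F be group elements. Then δ_{i_1}…δ_{i_r}(u · x_{i_k}^{ε} · v)(1) = ε · δ_{i_1}…δ_{i_{k-1}}(u)(1) · δ_{i_{k+1}}…δ_{i_r}(v)(1) + δ_{i_1}…δ_{i_r}(uv)(1), where an empty composite of Fox derivatives applied to a group element and evaluated at 1 is understood to be 1. -/
open MonoidAlgebra

/-!
Write `α = u x_i^ζ - u` in `ℤF`, so that `u x_i^ζ v = uv + α v`. The element `α` is killed by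
every `δ_j` with `j ≠ i` and by the augmentation, while `δ_i α = u · δ_i(x_i^ζ)`. By the Leibniz
rule `δ_j(αβ) = β(1) δ_j α + α δ_j β`, the factor `α` slides out of `δ_{i_{k+1}} ⋯ δ_{i_r}`,
and `δ_{i_k}` turns `α · δ_{i_{k+1}} ⋯ δ_{i_r}(v)` into
`δ_{i_{k+1}} ⋯ δ_{i_r}(v)(1) · u · δ_i(x_i^ζ)` plus a multiple of `α`, which the augmentation
kills. The derivatives `δ_{i_1} ⋯ δ_{i_{k-1}}` also kill `δ_i(x_i^ζ)`, so they only act on `u`,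
and `δ_i(x_i^ζ)(1) = ζ`.
-/

def IsFoxDerivation {G : Type*} [Monoid G] (δ : MonoidAlgebra ℤ G →ₗ[ℤ] MonoidAlgebra ℤ G) :
    Prop :=
  ∀ u v : G, δ (of ℤ G (u * v)) = δ (of ℤ G u) + of ℤ G u * δ (of ℤ G v)

namespace IsFoxDerivation

section Monoid

variable {G : Type*} [Monoid G] {δ : MonoidAlgebra ℤ G →ₗ[ℤ] MonoidAlgebra ℤ G}

theorem map_of_one (hδ : IsFoxDerivation δ) : δ (of ℤ G 1) = 0 := by
  have h := hδ 1 1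
  rw [mul_one, map_one, one_mul] at h
  exact left_eq_add.mp h

theorem leibniz (hδ : IsFoxDerivation δ) {ε : MonoidAlgebra ℤ G →+* ℤ}
    (hε : ∀ g : G, ε (of ℤ G g) = 1) (α β : MonoidAlgebra ℤ G) :
    δ (α * β) = ε β • δ α + α * δ β := by
  induction α using MonoidAlgebra.induction_on with
  | of u =>
    induction β using MonoidAlgebra.induction_on with
    | of v => rw [← map_mul, hδ u v, hε, one_smul]
    | add β₁ β₂ h₁ h₂ =>
      rw [mul_add, map_add, h₁, h₂, map_add, map_add, mul_add, add_smul]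
      abel
    | smul r β h =>
      rw [mul_smul_comm, map_smul, h, map_zsmul, smul_add, smul_smul, map_smul,
        mul_smul_comm, smul_eq_mul]
  | add α₁ α₂ h₁ h₂ =>
    rw [add_mul, map_add, h₁, h₂, map_add, smul_add, add_mul]
    abel
  | smul r α h =>
    rw [smul_mul_assoc, map_smul, h, smul_add, map_smul, smul_mul_assoc, smul_comm (ε β) r]

end Monoid

section Group

variable {G : Type*} [Group G] {δ δ' : MonoidAlgebra ℤ G →ₗ[ℤ] MonoidAlgebra ℤ G}

theorem map_of_inv (hδ : IsFoxDerivation δ) (w : G) :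
    δ (of ℤ G w⁻¹) = -(of ℤ G w⁻¹ * δ (of ℤ G w)) := by
  have h := hδ w⁻¹ w
  rw [inv_mul_cancel, hδ.map_of_one] at h
  exact eq_neg_of_add_eq_zero_left h.symm

theorem map_of_zpow_add_one (hδ : IsFoxDerivation δ) (x : G) (k : ℤ) :
    δ (of ℤ G (x ^ (k + 1))) = δ (of ℤ G (x ^ k)) + of ℤ G (x ^ k) * δ (of ℤ G x) := by
  rw [zpow_add_one, hδ]

theorem map_of_zpow_sub_one (hδ : IsFoxDerivation δ) (x : G) (k : ℤ) :
    δ (of ℤ G (x ^ (k - 1))) = δ (of ℤ G (x ^ k)) - of ℤ G (x ^ (k - 1)) * δ (of ℤ G x) := by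
  rw [zpow_sub_one, hδ, hδ.map_of_inv, mul_neg, ← mul_assoc, ← map_mul, sub_eq_add_neg]

theorem map_of_zpow_eq_zero (hδ : IsFoxDerivation δ) {x : G} (hx : δ (of ℤ G x) = 0) (k : ℤ) :
    δ (of ℤ G (x ^ k)) = 0 := by
  induction k using Int.induction_on with
  | zero => rw [zpow_zero, hδ.map_of_one]
  | succ k ih => rw [hδ.map_of_zpow_add_one, ih, hx, mul_zero, add_zero]
  | pred k ih => rw [hδ.map_of_zpow_sub_one, ih, hx, mul_zero, sub_zero]

theorem augmentation_map_of_zpow (hδ : IsFoxDerivation δ) {ε : MonoidAlgebra ℤ G →+* ℤ}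
    (hε : ∀ g : G, ε (of ℤ G g) = 1) (x : G) (k : ℤ) :
    ε (δ (of ℤ G (x ^ k))) = k * ε (δ (of ℤ G x)) := by
  induction k using Int.induction_on with
  | zero => rw [zpow_zero, hδ.map_of_one, map_zero, zero_mul]
  | succ k ih => rw [hδ.map_of_zpow_add_one, map_add, map_mul, ih, hε]; ring
  | pred k ih => rw [hδ.map_of_zpow_sub_one, map_sub, map_mul, ih, hε]; ring

theorem map_map_of_zpow_eq_zero (hδ : IsFoxDerivation δ) (hδ' : IsFoxDerivation δ')
    {ε : MonoidAlgebra ℤ G →+* ℤ} (hε : ∀ g : G, ε (of ℤ G g) = 1) {x : G}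
    (hx : δ' (of ℤ G x) = 0) (hxx : δ' (δ (of ℤ G x)) = 0) (k : ℤ) :
    δ' (δ (of ℤ G (x ^ k))) = 0 := by
  have hpow := hδ'.map_of_zpow_eq_zero hx
  induction k using Int.induction_on with
  | zero => rw [zpow_zero, hδ.map_of_one, map_zero]
  | succ k ih => simp only [hδ.map_of_zpow_add_one, map_add, hδ'.leibniz hε, ih, hpow, hxx,
      smul_zero, mul_zero, add_zero]
  | pred k ih => simp only [hδ.map_of_zpow_sub_one, map_sub, hδ'.leibniz hε, ih, hpow, hxx,
      smul_zero, mul_zero, add_zero, sub_zero]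

end Group

end IsFoxDerivation

section foxIter

variable {n : ℕ} {δ : Fin n → (GR n →ₗ[ℤ] GR n)}

theorem foxIter_eq_prod (l : List (Fin n)) (x : GR n) : foxIter δ l x = (l.map δ).prod x := by
  induction l with
  | nil => rfl
  | cons j l ih => simp only [foxIter, ih, List.map_cons, List.prod_cons, Module.End.mul_apply]

theorem foxIter_add (l : List (Fin n)) (x y : GR n) :
    foxIter δ l (x + y) = foxIter δ l x + foxIter δ l y := by
  simp only [foxIter_eq_prod, map_add]

theorem foxIter_zsmul (l : List (Fin n)) (c : ℤ) (x : GR n) :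
    foxIter δ l (c • x) = c • foxIter δ l x := by
  simp only [foxIter_eq_prod, map_zsmul]

theorem foxIter_append (l₁ l₂ : List (Fin n)) (x : GR n) :
    foxIter δ (l₁ ++ l₂) x = foxIter δ l₁ (foxIter δ l₂ x) := by
  simp only [foxIter_eq_prod, List.map_append, List.prod_append, Module.End.mul_apply]

theorem foxIter_const_mul (hδ : ∀ j, IsFoxDerivation (δ j)) {ε : GR n →+* ℤ}
    (hε : ∀ g : FG n, ε (of ℤ (FG n) g) = 1) {l : List (Fin n)} {α : GR n}
    (hα : ∀ j ∈ l, δ j α = 0) (β : GR n) :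
    foxIter δ l (α * β) = α * foxIter δ l β := by
  induction l with
  | nil => rfl
  | cons j l ih =>
    rw [foxIter, foxIter, ih fun k hk => hα k (List.mem_cons_of_mem j hk), (hδ j).leibniz hε,
      hα j List.mem_cons_self, smul_zero, zero_add]

theorem foxIter_cons_mul_const (hδ : ∀ j, IsFoxDerivation (δ j)) {ε : GR n →+* ℤ}
    (hε : ∀ g : FG n, ε (of ℤ (FG n) g) = 1) {j : Fin n} {l : List (Fin n)} {γ : GR n}
    (hγ : ∀ k ∈ j :: l, δ k γ = 0) (β : GR n) :
    foxIter δ (j :: l) (β * γ) = ε γ • foxIter δ (j :: l) β := by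
  induction l generalizing j with
  | nil =>
    rw [foxIter, foxIter, (hδ j).leibniz hε, hγ j List.mem_cons_self, mul_zero, add_zero]
    rfl
  | cons k l ih =>
    rw [foxIter, ih fun m hm => hγ m (List.mem_cons_of_mem j hm), map_zsmul]
    rfl

theorem augmentation_foxIter_mul_const (hδ : ∀ j, IsFoxDerivation (δ j)) {ε : GR n →+* ℤ}
    (hε : ∀ g : FG n, ε (of ℤ (FG n) g) = 1) {l : List (Fin n)} {γ : GR n}
    (hγ : ∀ k ∈ l, δ k γ = 0) (β : GR n) :
    ε (foxIter δ l (β * γ)) = ε γ * ε (foxIter δ l β) := by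
  cases l with
  | nil => exact (map_mul ε β γ).trans (mul_comm _ _)
  | cons j l => rw [foxIter_cons_mul_const hδ hε hγ, map_zsmul, smul_eq_mul]

theorem augmentation_foxIter_mul_mul (hδ : ∀ j, IsFoxDerivation (δ j)) {ε : GR n →+* ℤ}
    (hε : ∀ g : FG n, ε (of ℤ (FG n) g) = 1) {a b : List (Fin n)} {i : Fin n} {w : FG n}
    (hw : ∀ j ∈ a ++ b, δ j (of ℤ (FG n) w) = 0)
    (hdw : ∀ j ∈ a, δ j (δ i (of ℤ (FG n) w)) = 0) (u v : FG n) :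
    ε (foxIter δ (a ++ i :: b) (of ℤ (FG n) (u * w * v))) =
      ε (δ i (of ℤ (FG n) w)) *
          (ε (foxIter δ a (of ℤ (FG n) u)) * ε (foxIter δ b (of ℤ (FG n) v))) +
        ε (foxIter δ (a ++ i :: b) (of ℤ (FG n) (u * v))) := by
  set O := of ℤ (FG n)
  set α := O (u * w) - O u
  have hα : ∀ j ∈ a ++ b, δ j α = 0 := fun j hj => by
    rw [map_sub, hδ j, hw j hj, mul_zero, add_zero, sub_self]
  have hαi : δ i α = O u * δ i (O w) := by rw [map_sub, hδ i, add_sub_cancel_left]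
  have hεα : ε α = 0 := by rw [map_sub, hε, hε, sub_self]
  have hdecomp : O (u * w * v) = O (u * v) + α * O v := by
    rw [sub_mul, ← map_mul, ← map_mul, mul_assoc]
    abel
  have hib : foxIter δ (i :: b) (O (u * w * v)) =
      foxIter δ (i :: b) (O (u * v)) + ε (foxIter δ b (O v)) • (O u * δ i (O w)) +
        α * foxIter δ (i :: b) (O v) := by
    rw [foxIter, hdecomp, foxIter_add,
      foxIter_const_mul hδ hε fun j hj => hα j (List.mem_append_right a hj),
      map_add, (hδ i).leibniz hε, hαi, add_assoc]
    rfl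
  rw [foxIter_append, hib, foxIter_add, foxIter_add, foxIter_zsmul,
    foxIter_const_mul hδ hε fun j hj => hα j (List.mem_append_left b hj),
    map_add, map_add, map_zsmul, augmentation_foxIter_mul_const hδ hε hdw, map_mul ε α, hεα,
    foxIter_append, smul_eq_mul]
  ring

end foxIter

theorem fox_calculus_key_lemma_general (n : ℕ)
    (δ : Fin n → (GR n →ₗ[ℤ] GR n))
    (hδ₁ : ∀ i : Fin n, δ i (of ℤ (FG n) (FreeGroup.of i)) = 1)
    (hδ₂ : ∀ i j : Fin n, j ≠ i → δ i (of ℤ (FG n) (FreeGroup.of j)) = 0)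
    (hδ₃ : ∀ (i : Fin n) (u v : FG n),
      δ i (of ℤ (FG n) (u * v)) =
        δ i (of ℤ (FG n) u) + of ℤ (FG n) u * δ i (of ℤ (FG n) v))
    (ε : GR n →+* ℤ)
    (hε : ∀ g : FG n, ε (of ℤ (FG n) g) = 1)
    (a b : List (Fin n)) (i : Fin n) (hnd : (a ++ i :: b).Nodup)
    (ζ : ℤ) (u v : FG n) :
    ε (foxIter δ (a ++ i :: b) (of ℤ (FG n) (u * (FreeGroup.of i) ^ ζ * v))) =
      ζ * (ε (foxIter δ a (of ℤ (FG n) u)) * ε (foxIter δ b (of ℤ (FG n) v))) +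
        ε (foxIter δ (a ++ i :: b) (of ℤ (FG n) (u * v))) := by
  have hδ : ∀ j, IsFoxDerivation (δ j) := hδ₃
  have hi : i ∉ a ++ b := (List.nodup_cons.mp (List.nodup_middle.mp hnd)).1
  have hx : ∀ j ∈ a ++ b, δ j (of ℤ (FG n) (FreeGroup.of i)) = 0 := fun j hj =>
    hδ₂ j i (ne_of_mem_of_not_mem hj hi).symm
  have hδx : ∀ j, δ j (δ i (of ℤ (FG n) (FreeGroup.of i))) = 0 := fun j => by
    rw [hδ₁, ← map_one (of ℤ (FG n)), (hδ j).map_of_one]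
  rw [augmentation_foxIter_mul_mul hδ hε (fun j hj => (hδ j).map_of_zpow_eq_zero (hx j hj) ζ)
      (fun j hj => (hδ i).map_map_of_zpow_eq_zero (hδ j) hε
        (hx j (List.mem_append_left b hj)) (hδx j) ζ),
    (hδ i).augmentation_map_of_zpow hε, hδ₁, map_one, mul_one]

/-- Key Fox calculus lemma: for pairwise distinct indices `i₁, …, iᵣ` (here the list
`a ++ i :: b` with `i = iₖ`), `ζ = ±1`, and group elements `u, v`:
`δ_{i₁}…δ_{iᵣ}(u x_{iₖ}^ζ v)(1) = ζ · δ_{i₁}…δ_{iₖ₋₁}(u)(1) · δ_{iₖ₊₁}…δ_{iᵣ}(v)(1)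
  + δ_{i₁}…δ_{iᵣ}(uv)(1)`. -/
theorem fox_calculus_key_lemma (n : ℕ)
    (δ : Fin n → (GR n →ₗ[ℤ] GR n))
    (hδ₁ : ∀ i : Fin n, δ i (of ℤ (FG n) (FreeGroup.of i)) = 1)
    (hδ₂ : ∀ i j : Fin n, j ≠ i → δ i (of ℤ (FG n) (FreeGroup.of j)) = 0)
    (hδ₃ : ∀ (i : Fin n) (u v : FG n),
      δ i (of ℤ (FG n) (u * v)) =
        δ i (of ℤ (FG n) u) + of ℤ (FG n) u * δ i (of ℤ (FG n) v))
    (ε : GR n →+* ℤ)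
    (hε : ∀ g : FG n, ε (of ℤ (FG n) g) = 1)
    (a b : List (Fin n)) (i : Fin n) (hnd : (a ++ i :: b).Nodup)
    (ζ : ℤ) (hζ : ζ = 1 ∨ ζ = -1) (u v : FG n) :
    ε (foxIter δ (a ++ i :: b) (of ℤ (FG n) (u * (FreeGroup.of i) ^ ζ * v))) =
      ζ * (ε (foxIter δ a (of ℤ (FG n) u)) * ε (foxIter δ b (of ℤ (FG n) v))) +
        ε (foxIter δ (a ++ i :: b) (of ℤ (FG n) (u * v))) :=
  fox_calculus_key_lemma_general n δ hδ₁ hδ₂ hδ₃ ε hε a b i hnd ζ u v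
end

section
/- (Algebraic form of the skein relation for Milnor invariants, positive crossing.) Let i_1, …, i_r ∈ {1, …, n} be pairwise distinct indices, let 1 ≤ k ≤ r, and let u, v, w ∈ F be group elements. Then δ_{i_1}…δ_{i_r}(v · u⁻¹ x_{i_k} u · w)(1) − δ_{i_1}…δ_{i_r}(v w)(1) = δ_{i_1}…δ_{i_{k-1}}(v u⁻¹)(1) · δ_{i_{k+1}}…δ_{i_r}(u w)(1), where an empty composite of Fox derivatives applied to a group element and evaluated at 1 is understood to be 1. (In the topological interpretation, v u⁻¹ x_{i_k} u w and v w are the words in meridians representing the loose components l₊ and l₋ of two string links differing in one crossing of l with the i_k-th strand, and v u⁻¹, u w represent the loose components l_∞, l₀ of the two splittings of that crossing; the left-hand side is μ_{i_1…i_r}(L, l₊) − μ_{i_1…i_r}(L, l₋) and the right-hand side is μ_{i_1…i_{k-1}}(L − L_{i_k}, l_∞)·μ_{i_{k+1}…i_r}(L − L_{i_k}, l₀).) -/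
/-!
Write `μ_l(x) = ε(δ_l x)`. Since `x_i = 1 + (x_i - 1)`, the left-hand side is
`μ_l(v u⁻¹ · (x_i - 1) · u w)` with `l = a ++ i :: b`. The Leibniz rule makes `μ` multiplicative
in the sense of a coproduct, `μ_l(x y) = ∑_{l = p ++ q} μ_p(x) μ_q(y)`, and
`μ_q(x_i - 1)` is `1` for `q = [i]` and `0` otherwise. As `i` occurs in `l` exactly once, only the
splitting `l = a ++ [i] ++ b` survives, and it contributes `μ_a(v u⁻¹) μ_b(u w)`.
-/

open MonoidAlgebra

section Leibniz

variable {G : Type*} [Monoid G] (δ : MonoidAlgebra ℤ G →ₗ[ℤ] MonoidAlgebra ℤ G)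
  (ε : MonoidAlgebra ℤ G →+* ℤ)

def IsFoxLeibniz : Prop :=
  ∀ g h : G, δ (of ℤ G (g * h)) = δ (of ℤ G g) + of ℤ G g * δ (of ℤ G h)

variable {δ}

theorem IsFoxLeibniz.apply_one (hδ : IsFoxLeibniz δ) : δ 1 = 0 := by
  simpa [← MonoidAlgebra.of_apply] using hδ 1 1

theorem IsFoxLeibniz.apply_mul (hδ : IsFoxLeibniz δ) (hε : ∀ g : G, ε (of ℤ G g) = 1)
    (x y : MonoidAlgebra ℤ G) :
    δ (x * y) = ε y • δ x + x * δ y := by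
  induction x using MonoidAlgebra.induction_on with
  | of g =>
    induction y using MonoidAlgebra.induction_on with
    | of h => rw [← map_mul, hδ, hε, one_smul]
    | add y y' hy hy' => simp only [mul_add, map_add, hy, hy', add_smul]; abel
    | smul r y hy => simp only [mul_smul_comm, map_zsmul, hy, smul_add, smul_eq_mul, mul_smul]
  | add x x' hx hx' => simp only [add_mul, map_add, hx, hx', smul_add]; abel
  | smul r x hx => simp only [smul_mul_assoc, map_zsmul, hx, smul_add, smul_comm r (ε y)]

end Leibniz

namespace FoxCalculus

variable {n : ℕ} (δ : Fin n → (GR n →ₗ[ℤ] GR n)) (ε : GR n →+* ℤ)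

theorem foxIter_eq_prod (l : List (Fin n)) (x : GR n) : foxIter δ l x = (l.map δ).prod x := by
  induction l with
  | nil => rfl
  | cons i l ih => simp [foxIter, ih, Module.End.mul_apply]

theorem foxIter_append (l₁ l₂ : List (Fin n)) (x : GR n) :
    foxIter δ (l₁ ++ l₂) x = foxIter δ l₁ (foxIter δ l₂ x) := by
  simp [foxIter_eq_prod, Module.End.mul_apply]

theorem foxIter_add (l : List (Fin n)) (x y : GR n) :
    foxIter δ l (x + y) = foxIter δ l x + foxIter δ l y := by
  simp only [foxIter_eq_prod, map_add]

theorem foxIter_sub (l : List (Fin n)) (x y : GR n) :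
    foxIter δ l (x - y) = foxIter δ l x - foxIter δ l y := by
  simp only [foxIter_eq_prod, map_sub]

theorem foxIter_zsmul (l : List (Fin n)) (r : ℤ) (x : GR n) :
    foxIter δ l (r • x) = r • foxIter δ l x := by
  simp only [foxIter_eq_prod, map_zsmul]

theorem foxIter_nil (x : GR n) : foxIter δ [] x = x := rfl

theorem foxIter_singleton (i : Fin n) (x : GR n) : foxIter δ [i] x = δ i x := rfl

theorem foxIter_one (hδ : ∀ i, IsFoxLeibniz (δ i)) {l : List (Fin n)} (hl : l ≠ []) : foxIter δ l 1 = 0 := by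
  obtain ⟨l, j, rfl⟩ := (List.eq_nil_or_concat' l).resolve_left hl
  rw [foxIter_append, foxIter_singleton, (hδ j).apply_one, foxIter_eq_prod, map_zero]

theorem eps_foxIter_mul (hδ : ∀ i, IsFoxLeibniz (δ i))
    (hε : ∀ g : FG n, ε (of ℤ (FG n) g) = 1) (l : List (Fin n)) (x y : GR n) :
    ε (foxIter δ l (x * y)) =
      ∑ k ∈ Finset.range (l.length + 1),
        ε (foxIter δ (l.take k) x) * ε (foxIter δ (l.drop k) y) := by
  induction l using List.reverseRecOn generalizing y with
  | nil => simp [foxIter_nil]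
  | append_singleton l j ih =>
    have htake : ∀ k ∈ Finset.range (l.length + 1), (l ++ [j]).take k = l.take k := fun k hk =>
      List.take_append_of_le_length (Nat.lt_succ_iff.mp (Finset.mem_range.mp hk))
    have hdrop : ∀ k ∈ Finset.range (l.length + 1), (l ++ [j]).drop k = l.drop k ++ [j] :=
      fun k hk => List.drop_append_of_le_length (Nat.lt_succ_iff.mp (Finset.mem_range.mp hk))
    rw [List.length_append, List.length_singleton, Finset.sum_range_succ,
      Finset.sum_congr rfl fun k hk => by rw [htake k hk, hdrop k hk, foxIter_append],
      List.take_of_length_le (by simp), List.drop_of_length_le (by simp), foxIter_append,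
      foxIter_append, foxIter_singleton, (hδ j).apply_mul ε hε, foxIter_add, foxIter_zsmul,
      map_add, map_zsmul, ih, smul_eq_mul]
    simp only [foxIter_singleton, foxIter_nil]
    ring

theorem eps_foxIter_of_sub_one
    (hδ₁ : ∀ i : Fin n, δ i (of ℤ (FG n) (FreeGroup.of i)) = 1)
    (hδ₂ : ∀ i j : Fin n, j ≠ i → δ i (of ℤ (FG n) (FreeGroup.of j)) = 0)
    (hδ₃ : ∀ i, IsFoxLeibniz (δ i))
    (hε : ∀ g : FG n, ε (of ℤ (FG n) g) = 1) (i : Fin n) (l : List (Fin n)) :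
    ε (foxIter δ l (of ℤ (FG n) (FreeGroup.of i) - 1)) = if l = [i] then 1 else 0 := by
  obtain rfl | ⟨l, j, rfl⟩ := List.eq_nil_or_concat' l
  · rw [foxIter_nil, map_sub, hε, map_one, sub_self, if_neg (by simp)]
  rw [foxIter_append, foxIter_singleton, map_sub, (hδ₃ j).apply_one, sub_zero]
  by_cases hji : j = i
  · subst hji
    rw [hδ₁]
    obtain rfl | hl := eq_or_ne l []
    · simp [foxIter_nil]
    · rw [foxIter_one δ hδ₃ hl, map_zero, if_neg (by simp [hl])]
  · rw [hδ₂ j i (Ne.symm hji), foxIter_eq_prod, map_zero, map_zero,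
      if_neg (by simp [List.append_eq_singleton_iff, hji])]

theorem eps_foxIter_of_sub_one_mul
    (hδ₁ : ∀ i : Fin n, δ i (of ℤ (FG n) (FreeGroup.of i)) = 1)
    (hδ₂ : ∀ i j : Fin n, j ≠ i → δ i (of ℤ (FG n) (FreeGroup.of j)) = 0)
    (hδ₃ : ∀ i, IsFoxLeibniz (δ i))
    (hε : ∀ g : FG n, ε (of ℤ (FG n) g) = 1) (i : Fin n) (l : List (Fin n)) (y : GR n) :
    ε (foxIter δ l ((of ℤ (FG n) (FreeGroup.of i) - 1) * y)) =
      if l.head? = some i then ε (foxIter δ l.tail y) else 0 := by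
  simp only [eps_foxIter_mul δ ε hδ₃ hε, eps_foxIter_of_sub_one δ ε hδ₁ hδ₂ hδ₃ hε, ite_mul,
    one_mul, zero_mul]
  cases l with
  | nil => simp
  | cons j l =>
    rw [Finset.sum_eq_single_of_mem 1 (by simp)]
    · simp [eq_comm]
    · intro k hk hk1
      rw [if_neg]
      intro h
      have hlen := congrArg List.length h
      simp only [List.length_take, List.length_cons, List.length_nil] at hlen
      simp only [Finset.mem_range, List.length_cons] at hk
      omega

end FoxCalculus

open FoxCalculus in
/-- Algebraic form of the skein relation for Milnor invariants, positive crossing: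
`δ_{i₁}…δ_{iᵣ}(v u⁻¹ x_{iₖ} u w)(1) - δ_{i₁}…δ_{iᵣ}(vw)(1)
  = δ_{i₁}…δ_{iₖ₋₁}(v u⁻¹)(1) · δ_{iₖ₊₁}…δ_{iᵣ}(u w)(1)`,
i.e. `μ_{i₁…iᵣ}(L, l₊) - μ_{i₁…iᵣ}(L, l₋)
  = μ_{i₁…iₖ₋₁}(L - L_{iₖ}, l∞) · μ_{iₖ₊₁…iᵣ}(L - L_{iₖ}, l₀)`. -/
theorem milnor_skein_relation_positive (n : ℕ)
    (δ : Fin n → (GR n →ₗ[ℤ] GR n))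
    (hδ₁ : ∀ i : Fin n, δ i (of ℤ (FG n) (FreeGroup.of i)) = 1)
    (hδ₂ : ∀ i j : Fin n, j ≠ i → δ i (of ℤ (FG n) (FreeGroup.of j)) = 0)
    (hδ₃ : ∀ (i : Fin n) (u v : FG n),
      δ i (of ℤ (FG n) (u * v)) =
        δ i (of ℤ (FG n) u) + of ℤ (FG n) u * δ i (of ℤ (FG n) v))
    (ε : GR n →+* ℤ)
    (hε : ∀ g : FG n, ε (of ℤ (FG n) g) = 1)
    (a b : List (Fin n)) (i : Fin n) (hnd : (a ++ i :: b).Nodup) (u v w : FG n) :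
    ε (foxIter δ (a ++ i :: b)
        (of ℤ (FG n) (v * (u⁻¹ * FreeGroup.of i * u) * w))) -
      ε (foxIter δ (a ++ i :: b) (of ℤ (FG n) (v * w))) =
        ε (foxIter δ a (of ℤ (FG n) (v * u⁻¹))) *
          ε (foxIter δ b (of ℤ (FG n) (u * w))) := by
  have hword : of ℤ (FG n) (v * (u⁻¹ * FreeGroup.of i * u) * w) - of ℤ (FG n) (v * w) =
      of ℤ (FG n) (v * u⁻¹) * ((of ℤ (FG n) (FreeGroup.of i) - 1) * of ℤ (FG n) (u * w)) := by
    simp only [mul_sub, sub_mul, one_mul, ← map_mul]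
    group
  have hpos : ∀ k, (a ++ i :: b)[k]? = some i → k = a.length := fun k hk => by
    obtain ⟨hk, hki⟩ := List.getElem?_eq_some_iff.mp hk
    exact (hnd.getElem_inj_iff (hj := by simp)).mp (hki.trans (by simp))
  rw [← map_sub, ← foxIter_sub, hword, eps_foxIter_mul δ ε hδ₃ hε,
    Finset.sum_eq_single_of_mem a.length (by simp)]
  · rw [eps_foxIter_of_sub_one_mul δ ε hδ₁ hδ₂ hδ₃ hε, List.take_left' rfl, List.drop_left' rfl]
    simp
  · intro k _ hk
    rw [eps_foxIter_of_sub_one_mul δ ε hδ₁ hδ₂ hδ₃ hε, List.head?_drop,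
      if_neg (mt (hpos k) hk), mul_zero]
end

section
/- (Invariance of μ-invariants with distinct indices under the link-homotopy relations; well-definedness on the reduced group ring.) Let i_1, …, i_r ∈ {1, …, n} be pairwise distinct indices, let j ∈ {1, …, n} be any index, and let g, h, u, v ∈ F be group elements. Write a = g x_j g⁻¹ and b = h x_j h⁻¹ (two conjugates of the same generator x_j). Then δ_{i_1}…δ_{i_r}(u · (a b a⁻¹ b⁻¹) · v)(1) = δ_{i_1}…δ_{i_r}(u v)(1). In other words, inserting the commutator of two conjugates of the same generator into a word does not change any iterated Fox derivative with pairwise distinct indices evaluated at 1; hence the functionals g ↦ δ_{i_1}…δ_{i_r}(g)(1) with distinct indices descend to the reduced free group F̃ (the quotient of F by the relations that each generator commutes with all of its conjugates). -/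
/-! Write `μ_I(x) = ε(δ_I x)`. The Leibniz rule gives the coproduct formula
`μ_I(xy) = ∑_{I = J ++ K} μ_J(x) μ_K(y)`, so for any family of index lists closed under
sublists, the elements on which all those `μ_I` vanish form a two-sided ideal. For
`a = g xⱼ g⁻¹` the element `a - 1 = g (xⱼ - 1) g⁻¹` is killed by every `μ_I` with `j ∉ I`,
hence a product of two such elements is killed by every `μ_I` in which `j` occurs at most
once. Since `aba⁻¹b⁻¹ - 1 = ((a - 1)(b - 1) - (b - 1)(a - 1)) a⁻¹b⁻¹`, the same holds for
`u (aba⁻¹b⁻¹ - 1) v`, and a list without repetitions contains `j` at most once. -/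

open MonoidAlgebra

theorem MonoidAlgebra.of_mul_mul_inv_mul_inv_sub_one {k G : Type*} [Ring k] [Group G]
    (a b : G) :
    of k G (a * b * a⁻¹ * b⁻¹) - 1 =
      ((of k G a - 1) * (of k G b - 1) - (of k G b - 1) * (of k G a - 1)) *
        of k G (a⁻¹ * b⁻¹) := by
  have hba : b * a * (a⁻¹ * b⁻¹) = 1 := by group
  rw [show ∀ x y : MonoidAlgebra k G, (x - 1) * (y - 1) - (y - 1) * (x - 1) = x * y - y * x by
      intro x y; noncomm_ring,
    sub_mul, ← map_mul, ← map_mul, ← map_mul, ← map_mul, hba, map_one, ← mul_assoc]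

section FoxDerivation

variable {G : Type*} [Monoid G] (d : MonoidAlgebra ℤ G →ₗ[ℤ] MonoidAlgebra ℤ G)
  (hd : ∀ u v : G, d (of ℤ G (u * v)) = d (of ℤ G u) + of ℤ G u * d (of ℤ G v))
include hd

theorem fox_map_one_eq_zero : d 1 = 0 := by
  have h := hd 1 1
  rw [mul_one, map_one, one_mul] at h
  exact left_eq_add.mp h

theorem fox_leibniz (ε : MonoidAlgebra ℤ G →+* ℤ) (hε : ∀ g : G, ε (of ℤ G g) = 1)
    (x y : MonoidAlgebra ℤ G) : d (x * y) = ε y • d x + x * d y := by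
  induction x using MonoidAlgebra.induction_on with
  | of u =>
    induction y using MonoidAlgebra.induction_on with
    | of v =>
      rw [← map_mul, hd, hε, one_smul]
    | add y y' hy hy' =>
      simp only [mul_add, map_add, hy, hy', add_smul]
      abel
    | smul r y hy => simp only [mul_smul_comm, map_smul, hy, map_zsmul, smul_add, smul_smul,
        smul_eq_mul]
  | add x x' hx hx' =>
    simp only [add_mul, map_add, hx, hx', smul_add]
    abel
  | smul r x hx => simp only [smul_mul_assoc, map_smul, hx, smul_add, smul_smul, mul_comm]

end FoxDerivation

section FoxCoefficients

variable {n : ℕ} (δ : Fin n → (GR n →ₗ[ℤ] GR n)) (ε : GR n →+* ℤ)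

noncomputable def foxCoeff (I : List (Fin n)) (x : GR n) : ℤ := ε (foxIter δ I x)

theorem foxIter_sub (I : List (Fin n)) (x y : GR n) :
    foxIter δ I (x - y) = foxIter δ I x - foxIter δ I y := by
  induction I with
  | nil => rfl
  | cons i I ih => simp only [foxIter, ih, map_sub]

theorem foxCoeff_sub (I : List (Fin n)) (x y : GR n) :
    foxCoeff δ ε I (x - y) = foxCoeff δ ε I x - foxCoeff δ ε I y := by
  simp only [foxCoeff, foxIter_sub, map_sub]

theorem foxIter_eq_zero {x : GR n} {I : List (Fin n)} (hI : I ≠ [])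
    (hx : ∀ i ∈ I, δ i x = 0) : foxIter δ I x = 0 := by
  induction I with
  | nil => exact absurd rfl hI
  | cons i I ih =>
    cases I with
    | nil => exact hx i List.mem_cons_self
    | cons i' I =>
      rw [foxIter, ih (List.cons_ne_nil _ _) fun k hk => hx k (List.mem_cons_of_mem _ hk),
        map_zero]

variable (hδ : ∀ (i : Fin n) (u v : FG n),
      δ i (of ℤ (FG n) (u * v)) = δ i (of ℤ (FG n) u) + of ℤ (FG n) u * δ i (of ℤ (FG n) v))
    (hε : ∀ g : FG n, ε (of ℤ (FG n) g) = 1)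
include hδ hε

theorem foxIter_mul (I : List (Fin n)) (x y : GR n) :
    foxIter δ I (x * y) = x * foxIter δ I y +
      ∑ k ∈ Finset.range I.length,
        ε (foxIter δ (I.drop (k + 1)) y) • foxIter δ (I.take (k + 1)) x := by
  induction I with
  | nil => simp [foxIter]
  | cons i I ih =>
    rw [foxIter, ih, map_add, fox_leibniz (δ i) (hδ i) ε hε, map_sum, List.length_cons,
      Finset.sum_range_succ']
    simp only [List.drop_succ_cons, List.take_succ_cons, List.drop_zero, List.take_zero,
      map_smul, foxIter]
    abel

theorem foxCoeff_mul (I : List (Fin n)) (x y : GR n) :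
    foxCoeff δ ε I (x * y) =
      ∑ k ∈ Finset.range (I.length + 1),
        foxCoeff δ ε (I.take k) x * foxCoeff δ ε (I.drop k) y := by
  rw [foxCoeff, foxIter_mul δ ε hδ hε, map_add, map_sum, Finset.sum_range_succ', add_comm]
  simp only [foxCoeff, List.take_zero, List.drop_zero, map_zsmul, smul_eq_mul, map_mul,
    foxIter, mul_comm]

section IdealOfSublistClosed

variable {S : List (Fin n) → Prop} (hS : ∀ ⦃I J : List (Fin n)⦄, List.Sublist J I → S I → S J)
include hS

theorem foxCoeff_mul_eq_zero_of_right {y : GR n} (hy : ∀ I, S I → foxCoeff δ ε I y = 0)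
    (x : GR n) {I : List (Fin n)} (hI : S I) : foxCoeff δ ε I (x * y) = 0 := by
  rw [foxCoeff_mul δ ε hδ hε]
  exact Finset.sum_eq_zero fun k _ => by rw [hy _ (hS (List.drop_sublist k I) hI), mul_zero]

theorem foxCoeff_mul_eq_zero_of_left {x : GR n} (hx : ∀ I, S I → foxCoeff δ ε I x = 0)
    (y : GR n) {I : List (Fin n)} (hI : S I) : foxCoeff δ ε I (x * y) = 0 := by
  rw [foxCoeff_mul δ ε hδ hε]
  exact Finset.sum_eq_zero fun k _ => by rw [hx _ (hS (List.take_sublist k I) hI), zero_mul]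

theorem foxCoeff_mul_mul_eq_zero_of_middle {y : GR n}
    (hy : ∀ I, S I → foxCoeff δ ε I y = 0) (x z : GR n) {I : List (Fin n)} (hI : S I) :
    foxCoeff δ ε I (x * y * z) = 0 :=
  foxCoeff_mul_eq_zero_of_left δ ε hδ hε hS
    (fun _ => foxCoeff_mul_eq_zero_of_right δ ε hδ hε hS hy x) z hI

end IdealOfSublistClosed

theorem foxCoeff_mul_eq_zero_of_count_le_one (j : Fin n) {x y : GR n}
    (hx : ∀ I, j ∉ I → foxCoeff δ ε I x = 0) (hy : ∀ I, j ∉ I → foxCoeff δ ε I y = 0)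
    {I : List (Fin n)} (hI : I.count j ≤ 1) : foxCoeff δ ε I (x * y) = 0 := by
  rw [foxCoeff_mul δ ε hδ hε]
  refine Finset.sum_eq_zero fun k _ => ?_
  by_cases hj : j ∈ I.take k
  · have hcount : (I.take k).count j + (I.drop k).count j = I.count j := by
      rw [← List.count_append, List.take_append_drop]
    have hpos := List.count_pos_iff.mpr hj
    rw [hy _ fun hj' => by have := List.count_pos_iff.mpr hj'; omega, mul_zero]
  · rw [hx _ hj, zero_mul]

theorem foxCoeff_of_conj_sub_one_eq_zero
    (hδ_of : ∀ i j : Fin n, j ≠ i → δ i (of ℤ (FG n) (FreeGroup.of j)) = 0)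
    (j : Fin n) (g : FG n) {I : List (Fin n)} (hj : j ∉ I) :
    foxCoeff δ ε I (of ℤ (FG n) (g * FreeGroup.of j * g⁻¹) - 1) = 0 := by
  have hS : ∀ ⦃I J : List (Fin n)⦄, List.Sublist J I → j ∉ I → j ∉ J :=
    fun _ _ hJI hI hJ => hI (hJI.subset hJ)
  have hgen : ∀ J : List (Fin n), j ∉ J →
      foxCoeff δ ε J (of ℤ (FG n) (FreeGroup.of j) - 1) = 0 := by
    intro J hJ
    rcases eq_or_ne J [] with rfl | hJ_ne
    · rw [foxCoeff, foxIter, map_sub, hε, map_one, sub_self]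
    · rw [foxCoeff, foxIter_eq_zero δ hJ_ne fun i hi => ?_, map_zero]
      rw [map_sub, hδ_of i j fun h => hJ (h ▸ hi), fox_map_one_eq_zero (δ i) (hδ i), sub_zero]
  have hconj : of ℤ (FG n) (g * FreeGroup.of j * g⁻¹) - 1 =
      of ℤ (FG n) g * (of ℤ (FG n) (FreeGroup.of j) - 1) * of ℤ (FG n) g⁻¹ := by
    simp only [mul_sub, sub_mul, mul_one, ← map_mul, mul_inv_cancel, map_one]
  rw [hconj]
  exact foxCoeff_mul_mul_eq_zero_of_middle δ ε hδ hε hS hgen _ _ hj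

theorem foxCoeff_mul_commutator_sub_one_mul_eq_zero
    (hδ_of : ∀ i j : Fin n, j ≠ i → δ i (of ℤ (FG n) (FreeGroup.of j)) = 0)
    (j : Fin n) (g h : FG n) (x y : GR n) {I : List (Fin n)} (hI : I.count j ≤ 1) :
    foxCoeff δ ε I (x * (of ℤ (FG n)
        ((g * FreeGroup.of j * g⁻¹) * (h * FreeGroup.of j * h⁻¹) *
          (g * FreeGroup.of j * g⁻¹)⁻¹ * (h * FreeGroup.of j * h⁻¹)⁻¹) - 1) * y) = 0 := by
  have hS : ∀ ⦃I J : List (Fin n)⦄, List.Sublist J I → I.count j ≤ 1 → J.count j ≤ 1 :=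
    fun _ _ hJI hI => (hJI.count_le j).trans hI
  set a : FG n := g * FreeGroup.of j * g⁻¹
  set b : FG n := h * FreeGroup.of j * h⁻¹
  have hA : ∀ J, j ∉ J → foxCoeff δ ε J (of ℤ (FG n) a - 1) = 0 :=
    fun _ => foxCoeff_of_conj_sub_one_eq_zero δ ε hδ hε hδ_of j g
  have hB : ∀ J, j ∉ J → foxCoeff δ ε J (of ℤ (FG n) b - 1) = 0 :=
    fun _ => foxCoeff_of_conj_sub_one_eq_zero δ ε hδ hε hδ_of j h
  have hAB : ∀ J : List (Fin n), J.count j ≤ 1 → foxCoeff δ ε J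
      ((of ℤ (FG n) a - 1) * (of ℤ (FG n) b - 1) * of ℤ (FG n) (a⁻¹ * b⁻¹)) = 0 :=
    fun _ => foxCoeff_mul_eq_zero_of_left δ ε hδ hε hS
      (fun _ => foxCoeff_mul_eq_zero_of_count_le_one δ ε hδ hε j hA hB) _
  have hBA : ∀ J : List (Fin n), J.count j ≤ 1 → foxCoeff δ ε J
      ((of ℤ (FG n) b - 1) * (of ℤ (FG n) a - 1) * of ℤ (FG n) (a⁻¹ * b⁻¹)) = 0 :=
    fun _ => foxCoeff_mul_eq_zero_of_left δ ε hδ hε hS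
      (fun _ => foxCoeff_mul_eq_zero_of_count_le_one δ ε hδ hε j hB hA) _
  rw [of_mul_mul_inv_mul_inv_sub_one, sub_mul, mul_sub, sub_mul, foxCoeff_sub,
    foxCoeff_mul_mul_eq_zero_of_middle δ ε hδ hε hS hAB _ _ hI,
    foxCoeff_mul_mul_eq_zero_of_middle δ ε hδ hε hS hBA _ _ hI, sub_zero]

end FoxCoefficients

theorem milnor_invariant_link_homotopy_invariance_general (n : ℕ)
    (δ : Fin n → (GR n →ₗ[ℤ] GR n))
    (hδ₂ : ∀ i j : Fin n, j ≠ i → δ i (of ℤ (FG n) (FreeGroup.of j)) = 0)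
    (hδ₃ : ∀ (i : Fin n) (u v : FG n),
      δ i (of ℤ (FG n) (u * v)) =
        δ i (of ℤ (FG n) u) + of ℤ (FG n) u * δ i (of ℤ (FG n) v))
    (ε : GR n →+* ℤ)
    (hε : ∀ g : FG n, ε (of ℤ (FG n) g) = 1)
    (l : List (Fin n)) (hnd : l.Nodup) (j : Fin n) (g h u v : FG n) :
    ε (foxIter δ l (of ℤ (FG n)
        (u * ((g * FreeGroup.of j * g⁻¹) * (h * FreeGroup.of j * h⁻¹) *
          (g * FreeGroup.of j * g⁻¹)⁻¹ * (h * FreeGroup.of j * h⁻¹)⁻¹) * v))) =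
      ε (foxIter δ l (of ℤ (FG n) (u * v))) := by
  set c : FG n := (g * FreeGroup.of j * g⁻¹) * (h * FreeGroup.of j * h⁻¹) *
    (g * FreeGroup.of j * g⁻¹)⁻¹ * (h * FreeGroup.of j * h⁻¹)⁻¹
  have hdiff : of ℤ (FG n) (u * c * v) - of ℤ (FG n) (u * v) =
      of ℤ (FG n) u * (of ℤ (FG n) c - 1) * of ℤ (FG n) v := by
    simp only [map_mul]
    noncomm_ring
  rw [← sub_eq_zero]
  change foxCoeff δ ε l _ - foxCoeff δ ε l _ = 0
  rw [← foxCoeff_sub, hdiff]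
  exact foxCoeff_mul_commutator_sub_one_mul_eq_zero δ ε hδ₃ hε hδ₂ j g h _ _
    (List.nodup_iff_count_le_one.mp hnd j)

/-- Invariance under the link-homotopy relations: inserting the commutator of two
conjugates `a = g xⱼ g⁻¹`, `b = h xⱼ h⁻¹` of the same generator into a word does
not change any iterated Fox derivative with pairwise distinct indices evaluated
at `1`; hence these functionals descend to the reduced free group. -/
theorem milnor_invariant_link_homotopy_invariance (n : ℕ)
    (δ : Fin n → (GR n →ₗ[ℤ] GR n))
    (hδ₁ : ∀ i : Fin n, δ i (of ℤ (FG n) (FreeGroup.of i)) = 1)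
    (hδ₂ : ∀ i j : Fin n, j ≠ i → δ i (of ℤ (FG n) (FreeGroup.of j)) = 0)
    (hδ₃ : ∀ (i : Fin n) (u v : FG n),
      δ i (of ℤ (FG n) (u * v)) =
        δ i (of ℤ (FG n) u) + of ℤ (FG n) u * δ i (of ℤ (FG n) v))
    (ε : GR n →+* ℤ)
    (hε : ∀ g : FG n, ε (of ℤ (FG n) g) = 1)
    (l : List (Fin n)) (hnd : l.Nodup) (j : Fin n) (g h u v : FG n) :
    ε (foxIter δ l (of ℤ (FG n)
        (u * ((g * FreeGroup.of j * g⁻¹) * (h * FreeGroup.of j * h⁻¹) *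
          (g * FreeGroup.of j * g⁻¹)⁻¹ * (h * FreeGroup.of j * h⁻¹)⁻¹) * v))) =
      ε (foxIter δ l (of ℤ (FG n) (u * v))) :=
  milnor_invariant_link_homotopy_invariance_general n δ hδ₂ hδ₃ ε hε l hnd j g h u v
end

section
/- (Iterated Fox derivatives at 1 compute Magnus expansion coefficients, for positive words.) Let A be the free associative ℤ-algebra on noncommuting generators X_1, …, X_n, identified with the monoid algebra of the free monoid on n letters, so that the words in the letters form a ℤ-basis of A. For a finite sequence j_1, …, j_m ∈ {1, …, n}, let θ = (1 + X_{j_1})(1 + X_{j_2})⋯(1 + X_{j_m}) ∈ A be the Magnus expansion of the positive word g = x_{j_1} x_{j_2} ⋯ x_{j_m} ∈ F. Then for every finite sequence i_1, …, i_r ∈ {1, …, n}, the coefficient of the basis word X_{i_1} X_{i_2} ⋯ X_{i_r} in θ equals δ_{i_1}…δ_{i_r}(g)(1). -/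
/-!
Both sides obey the same recursion when a letter `x_j` is split off the front of the word.
On the Magnus side, the coefficient of `X_i X_w` in `(1 + X_j) θ` is the coefficient of
`X_i X_w` in `θ`, plus that of `X_w` when `i = j`. On the Fox side, the product rule reads
`δ_i (x_j w) = ε(w) δ_i(x_j) + x_j δ_i(w)`; the first summand is a constant, which all further
derivatives kill, and `ε (x_j v) = ε v`, so `ε ∘ δ_i δ_w` satisfies the same recursion.
-/

open MonoidAlgebra

namespace MonoidAlgebra

section FreeMonoid

variable {R α : Type*} [Semiring R]

theorem coeff_one_ofList_cons (i : α) (l : List α) :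
    (1 : MonoidAlgebra R (FreeMonoid α)).coeff (FreeMonoid.ofList (i :: l)) = 0 := by
  classical
  rw [one_def, coeff_single, Finsupp.single_apply, if_neg]
  intro h
  simpa using congrArg FreeMonoid.toList h

theorem coeff_of_mul_one (j : α) (x : MonoidAlgebra R (FreeMonoid α)) :
    (of R _ (FreeMonoid.of j) * x).coeff 1 = 0 :=
  coeff_single_mul_of_forall_mul_ne _ _ fun _ h => by
    simpa using congrArg FreeMonoid.toList h

theorem coeff_of_mul_ofList_cons [DecidableEq α] (j i : α) (l : List α)
    (x : MonoidAlgebra R (FreeMonoid α)) :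
    (of R _ (FreeMonoid.of j) * x).coeff (FreeMonoid.ofList (i :: l)) =
      if i = j then x.coeff (FreeMonoid.ofList l) else 0 := by
  split_ifs with hij
  · rw [hij, FreeMonoid.ofList_cons, of_apply, coeff_single_mul_mul, one_mul]
  · refine coeff_single_mul_of_forall_mul_ne _ _ fun _ h => hij ?_
    simpa using (List.cons.inj (congrArg FreeMonoid.toList h)).1.symm

end FreeMonoid

section Leibniz

variable {G : Type*} [Monoid G] {D : MonoidAlgebra ℤ G →ₗ[ℤ] MonoidAlgebra ℤ G}

theorem map_one_eq_zero_of_leibniz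
    (hD : ∀ u v : G, D (of ℤ G (u * v)) = D (of ℤ G u) + of ℤ G u * D (of ℤ G v)) :
    D 1 = 0 := by
  simpa [map_one] using hD 1 1

theorem map_of_mul_eq_of_leibniz
    (hD : ∀ u v : G, D (of ℤ G (u * v)) = D (of ℤ G u) + of ℤ G u * D (of ℤ G v))
    {ε : MonoidAlgebra ℤ G →+* ℤ} (hε : ∀ g, ε (of ℤ G g) = 1) (u : G) (w : MonoidAlgebra ℤ G) :
    D (of ℤ G u * w) = ε w • D (of ℤ G u) + of ℤ G u * D w := by
  induction w using MonoidAlgebra.induction_on with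
  | of g => rw [← map_mul, hD, hε, one_smul]
  | add x y hx hy => simp only [mul_add, map_add, hx, hy, add_smul]; abel
  | smul r x hx =>
    rw [mul_smul_comm, map_zsmul, map_zsmul, hx, map_zsmul, smul_eq_mul, mul_smul, smul_add,
      mul_smul_comm]

end Leibniz

end MonoidAlgebra

section FoxIter

variable {n : ℕ} {δ : Fin n → (GR n →ₗ[ℤ] GR n)}

theorem foxIter_cons_one (hδ : ∀ i, δ i 1 = 0) (i : Fin n) (l : List (Fin n)) :
    foxIter δ (i :: l) 1 = 0 := by
  induction l generalizing i with
  | nil => exact hδ i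
  | cons i' l ih => rw [foxIter, ih, map_zero]

theorem foxIter_cons_generator_mul
    (hδ₁ : ∀ i : Fin n, δ i (of ℤ (FG n) (FreeGroup.of i)) = 1)
    (hδ₂ : ∀ i j : Fin n, j ≠ i → δ i (of ℤ (FG n) (FreeGroup.of j)) = 0)
    (hδ₃ : ∀ (i : Fin n) (u v : FG n),
      δ i (of ℤ (FG n) (u * v)) = δ i (of ℤ (FG n) u) + of ℤ (FG n) u * δ i (of ℤ (FG n) v))
    {ε : GR n →+* ℤ} (hε : ∀ g : FG n, ε (of ℤ (FG n) g) = 1)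
    (i j : Fin n) (l : List (Fin n)) (w : GR n) :
    foxIter δ (i :: l) (of ℤ (FG n) (FreeGroup.of j) * w) =
      (if i = j then ε (foxIter δ l w) else 0) • (1 : GR n) +
        of ℤ (FG n) (FreeGroup.of j) * foxIter δ (i :: l) w := by
  have fox_generator_mul : ∀ (i : Fin n) (v : GR n), δ i (of ℤ (FG n) (FreeGroup.of j) * v) =
      (if i = j then ε v else 0) • (1 : GR n) + of ℤ (FG n) (FreeGroup.of j) * δ i v := by
    intro i v
    rw [map_of_mul_eq_of_leibniz (hδ₃ i) hε]
    split_ifs with hij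
    · rw [hij, hδ₁]
    · rw [hδ₂ i j (Ne.symm hij), smul_zero, zero_smul]
  induction l generalizing i with
  | nil => exact fox_generator_mul i w
  | cons i' l ih =>
    rw [foxIter, ih, map_add, map_zsmul, map_one_eq_zero_of_leibniz (hδ₃ i), smul_zero, zero_add,
      fox_generator_mul]
    rfl

end FoxIter

/-- Iterated Fox derivatives at `1` compute Magnus expansion coefficients for
positive words: the coefficient of the basis word `X_{i₁} ⋯ X_{iᵣ}` in the Magnus
expansion `(1 + X_{j₁}) ⋯ (1 + X_{jₘ})` of the positive word `g = x_{j₁} ⋯ x_{jₘ}`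
equals `δ_{i₁}…δ_{iᵣ}(g)(1)`. Here the free associative ℤ-algebra on `X₁, …, Xₙ`
is the monoid algebra of the free monoid on `n` letters, whose words form a ℤ-basis. -/
theorem magnus_expansion_coeff_eq_fox_derivative (n : ℕ)
    (δ : Fin n → (GR n →ₗ[ℤ] GR n))
    (hδ₁ : ∀ i : Fin n, δ i (of ℤ (FG n) (FreeGroup.of i)) = 1)
    (hδ₂ : ∀ i j : Fin n, j ≠ i → δ i (of ℤ (FG n) (FreeGroup.of j)) = 0)
    (hδ₃ : ∀ (i : Fin n) (u v : FG n),
      δ i (of ℤ (FG n) (u * v)) =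
        δ i (of ℤ (FG n) u) + of ℤ (FG n) u * δ i (of ℤ (FG n) v))
    (ε : GR n →+* ℤ)
    (hε : ∀ g : FG n, ε (of ℤ (FG n) g) = 1)
    (js : List (Fin n)) (is : List (Fin n)) :
    ((js.map fun j =>
        (1 : MonoidAlgebra ℤ (FreeMonoid (Fin n))) +
          MonoidAlgebra.of ℤ (FreeMonoid (Fin n)) (FreeMonoid.of j)).prod).coeff
      (FreeMonoid.ofList is) =
    ε (foxIter δ is (of ℤ (FG n) ((js.map FreeGroup.of).prod))) := by
  induction js generalizing is with
  | nil =>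
    rw [List.map_nil, List.prod_nil, List.map_nil, List.prod_nil, map_one]
    cases is with
    | nil => rw [FreeMonoid.ofList_nil, coeff_one_one, foxIter, map_one]
    | cons i l =>
      rw [coeff_one_ofList_cons,
        foxIter_cons_one (fun i => map_one_eq_zero_of_leibniz (hδ₃ i)), map_zero]
  | cons j js ih =>
    simp only [List.map_cons, List.prod_cons, add_mul, one_mul, coeff_add, Finsupp.add_apply,
      map_mul]
    cases is with
    | nil =>
      rw [FreeMonoid.ofList_nil, coeff_of_mul_one, add_zero, ← FreeMonoid.ofList_nil, ih,
        foxIter, foxIter, map_mul, hε, hε, one_mul]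
    | cons i l =>
      rw [coeff_of_mul_ofList_cons, foxIter_cons_generator_mul hδ₁ hδ₂ hδ₃ hε, map_add, map_mul,
        hε, one_mul, map_zsmul, map_one, smul_eq_mul, mul_one, ih, ih, add_comm]
end
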